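/- arXiv:2006.05463 — 4 statements merged into one kernel-verified Lean document; each statement's English description precedes it below -/
import Mathlib

section
/- If Act is finite, then the ω-axiom Y_ω is sound for ω-verdict equivalence: yes ≃_ω Σ_{a ∈ Act} a.yes. Explicitly, L_a(yes)·Act^ω = Act^ω = L_a(Σ_{a∈Act} a.yes)·Act^ω and both rejection languages are empty. -/
/-- Recursion-free regular monitors (with variables). -/
inductive Mon (Act : Type) : Type
  | end_ : Mon Act
  | yes : Mon Act
  | no : Mon Act
  | act : Act → Mon Act → Mon Act
  | plus : Mon Act → Mon Act → Mon Act
  | var : ℕ → Mon Act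

variable {Act : Type}

/-- Verdicts: `end`, `yes`, `no`. -/
inductive IsVerdict : Mon Act → Prop
  | end_ : IsVerdict Mon.end_
  | yes : IsVerdict Mon.yes
  | no : IsVerdict Mon.no

/-- Labelled transition relation; `none` is the silent action τ. -/
inductive Step : Mon Act → Option Act → Mon Act → Prop
  | act (a : Act) (m : Mon Act) : Step (Mon.act a m) (some a) m
  | plusL {m n m' : Mon Act} {α : Option Act} : Step m α m' → Step (Mon.plus m n) α m'
  | plusR {m n n' : Mon Act} {α : Option Act} : Step n α n' → Step (Mon.plus m n) α n'
  | verdict {v : Mon Act} {α : Option Act} : IsVerdict v → Step v α v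

/-- Reflexive-transitive closure of τ-steps. -/
def TauStar (m n : Mon Act) : Prop :=
  Relation.ReflTransGen (fun p q => Step p none q) m n

/-- Strong transition along a finite trace. -/
inductive Trace : Mon Act → List Act → Mon Act → Prop
  | refl (m : Mon Act) : Trace m [] m
  | cons {m m' m'' : Mon Act} {a : Act} {s : List Act} :
      Step m (some a) m' → Trace m' s m'' → Trace m (a :: s) m''

/-- Weak transition along a finite trace (τ-steps allowed throughout). -/
inductive WTrace : Mon Act → List Act → Mon Act → Prop
  | nil {m m' : Mon Act} : TauStar m m' → WTrace m [] m'
  | cons {m m₁ m₂ m' : Mon Act} {a : Act} {s : List Act} :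
      TauStar m m₁ → Step m₁ (some a) m₂ → WTrace m₂ s m' → WTrace m (a :: s) m'

/-- Acceptance language. -/
def La (m : Mon Act) : Set (List Act) := {s | WTrace m s Mon.yes}

/-- Rejection language. -/
def Lr (m : Mon Act) : Set (List Act) := {s | WTrace m s Mon.no}

/-- Verdict equivalence. -/
def VerdEq (m n : Mon Act) : Prop := La m = La n ∧ Lr m = Lr n

/-- `A · Act^ω`: infinite words having a finite prefix in `A`. -/
def omegaCl (A : Set (List Act)) : Set (ℕ → Act) :=
  {w | ∃ n : ℕ, (List.range n).map w ∈ A}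

/-- ω-verdict equivalence. -/
def OmegaEq (m n : Mon Act) : Prop :=
  omegaCl (La m) = omegaCl (La n) ∧ omegaCl (Lr m) = omegaCl (Lr n)

/-- Closed monitors: no variables. -/
def Closed : Mon Act → Prop
  | Mon.act _ m => Closed m
  | Mon.plus m n => Closed m ∧ Closed n
  | Mon.var _ => False
  | _ => True

/-- `yes` occurs as a subterm. -/
def HasYes : Mon Act → Prop
  | Mon.yes => True
  | Mon.act _ m => HasYes m
  | Mon.plus m n => HasYes m ∨ HasYes n
  | _ => False

/-- `no` occurs as a subterm. -/
def HasNo : Mon Act → Prop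
  | Mon.no => True
  | Mon.act _ m => HasNo m
  | Mon.plus m n => HasNo m ∨ HasNo n
  | _ => False

/-- Syntactic depth. -/
def depth : Mon Act → ℕ
  | Mon.act _ m => depth m + 1
  | Mon.plus m n => max (depth m) (depth n)
  | _ => 0

/-- Applying a substitution. -/
def msubst (σ : ℕ → Mon Act) : Mon Act → Mon Act
  | Mon.var x => σ x
  | Mon.act a m => Mon.act a (msubst σ m)
  | Mon.plus m n => Mon.plus (msubst σ m) (msubst σ n)
  | m => m

/-- Equational derivability from an axiom set `E`. -/
inductive Deriv (E : Mon Act → Mon Act → Prop) : Mon Act → Mon Act → Prop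
  | ax {m n} : E m n → Deriv E m n
  | refl (m) : Deriv E m m
  | symm {m n} : Deriv E m n → Deriv E n m
  | trans {m n p} : Deriv E m n → Deriv E n p → Deriv E m p
  | act (a : Act) {m n} : Deriv E m n → Deriv E (Mon.act a m) (Mon.act a n)
  | plus {m m' n n'} : Deriv E m m' → Deriv E n n' → Deriv E (Mon.plus m n) (Mon.plus m' n')
  | subst (σ : ℕ → Mon Act) {m n} : Deriv E m n → Deriv E (msubst σ m) (msubst σ n)

def vx : Mon Act := Mon.var 0
def vy : Mon Act := Mon.var 1
def vz : Mon Act := Mon.var 2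

/-- The axiom system `E_v`. -/
inductive EvAx : Mon Act → Mon Act → Prop
  | A1 : EvAx (Mon.plus vx vy) (Mon.plus vy vx)
  | A2 : EvAx (Mon.plus vx (Mon.plus vy vz)) (Mon.plus (Mon.plus vx vy) vz)
  | A3 : EvAx (Mon.plus vx vx) vx
  | A4 : EvAx (Mon.plus vx Mon.end_) vx
  | Ea (a : Act) : EvAx (Mon.act a Mon.end_) Mon.end_
  | Ya (a : Act) : EvAx Mon.yes (Mon.plus Mon.yes (Mon.act a Mon.yes))
  | Na (a : Act) : EvAx Mon.no (Mon.plus Mon.no (Mon.act a Mon.no))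
  | Da (a : Act) : EvAx (Mon.act a (Mon.plus vx vy)) (Mon.plus (Mon.act a vx) (Mon.act a vy))

/-- Sum of a list of monitors (`end` for the empty sum). -/
def sumList : List (Mon Act) → Mon Act
  | [] => Mon.end_
  | [m] => m
  | m :: ms => Mon.plus m (sumList ms)

/-- `s.m`: the monitor performing exactly the actions of `s` and then behaving as `m`. -/
def prefixMon (s : List Act) (m : Mon Act) : Mon Act :=
  List.foldr Mon.act m s

/-- Build `Σ_{(a,m)∈l} a.m [+ yes] [+ no]`. -/
def buildNF (l : List (Act × Mon Act)) (hy hn : Bool) : Mon Act :=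
  sumList (l.map (fun p => Mon.act p.1 p.2) ++
    (if hy then [Mon.yes] else []) ++ (if hn then [Mon.no] else []))

/-- Normal forms for closed monitors. -/
inductive NF : Mon Act → Prop
  | mk (l : List (Act × Mon Act)) (hy hn : Bool) :
      (l.map Prod.fst).Nodup →
      (∀ p ∈ l, p.2 ≠ Mon.end_) →
      (∀ p ∈ l, NF p.2) →
      NF (buildNF l hy hn)

/-- Build `Σ_{(a,m)∈l} a.m + Σ_{x∈vs} x [+ yes] [+ no]`. -/
def buildONF (l : List (Act × Mon Act)) (vs : List ℕ) (hy hn : Bool) : Mon Act :=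
  sumList (l.map (fun p => Mon.act p.1 p.2) ++ vs.map Mon.var ++
    (if hy then [Mon.yes] else []) ++ (if hn then [Mon.no] else []))

/-- Open normal forms. -/
inductive ONF : Mon Act → Prop
  | mk (l : List (Act × Mon Act)) (vs : List ℕ) (hy hn : Bool) :
      (l.map Prod.fst).Nodup → vs.Nodup →
      (∀ p ∈ l, p.2 ≠ Mon.end_) →
      (∀ p ∈ l, ONF p.2) →
      ONF (buildONF l vs hy hn)

/-- `s^i`: the `i`-fold concatenation of `s`. -/
def spow (s : List Act) (i : ℕ) : List Act := (List.replicate i s).flatten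

/-- All traces of length exactly `n` over the alphabet listed by `L`. -/
def tuples (L : List Act) : ℕ → List (List Act)
  | 0 => [[]]
  | n + 1 => (tuples L n).flatMap (fun t => L.map (fun a => a :: t))

/-- All traces of length at most `n`. -/
def allUpTo (L : List Act) (n : ℕ) : List (List Act) :=
  (List.range (n + 1)).flatMap (tuples L)

/-- `s̄^≤(m)`: sum of `s'.m` over traces `s'` with `|s'| ≤ |s|` that are not prefixes of `s`. -/
def sbarLe [DecidableEq Act] (L : List Act) (s : List Act) (m : Mon Act) : Mon Act :=
  sumList (((allUpTo L s.length).filter (fun t => !(t.isPrefixOf s))).map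
    (fun t => prefixMon t m))

/-- `s̄(m) = s̄^≤(m) + s.Σ_{a∈Act} a.m`. -/
def sbar [DecidableEq Act] (L : List Act) (s : List Act) (m : Mon Act) : Mon Act :=
  Mon.plus (sbarLe L s m) (prefixMon s (sumList (L.map fun a => Mon.act a m)))

/-- `s̄^(k)(m)`. -/
def sbarK [DecidableEq Act] (L : List Act) (s : List Act) (m : Mon Act) : ℕ → Mon Act
  | 0 => sbar L s m
  | 1 => sbar L s m
  | k + 2 =>
      Mon.plus
        (sumList ((List.range k).map (fun i => prefixMon (spow s (i + 1)) (sbarLe L s m))))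
        (prefixMon (spow s (k + 1)) (sbar L s m))

/-!
Every word has a one-letter prefix, and both `yes` and `Σ_{a ∈ Act} a.yes` accept every one-letter
word, so both ω-acceptance languages are everything. Neither monitor can reach `no`: each of their
transitions leads to `yes`, which is absorbing, so their rejection languages are empty.
-/

theorem Step.eq_of_isVerdict {v n : Mon Act} {α : Option Act} (hv : IsVerdict v)
    (h : Step v α n) : n = v := by
  cases h <;> first | rfl | cases hv

theorem Step.sumList_of_mem {l : List (Mon Act)} {m n : Mon Act} {α : Option Act}
    (hm : m ∈ l) (h : Step m α n) : Step (sumList l) α n := by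
  induction l with
  | nil => cases hm
  | cons x xs ih =>
    rcases xs with _ | ⟨y, ys⟩
    · rw [List.mem_singleton.mp hm] at h
      exact h
    · rcases List.mem_cons.mp hm with rfl | hm
      · exact Step.plusL h
      · exact Step.plusR (ih hm)

theorem Step.exists_mem_of_sumList {l : List (Mon Act)} {n : Mon Act} {α : Option Act}
    (hl : l ≠ []) (h : Step (sumList l) α n) : ∃ m ∈ l, Step m α n := by
  induction l with
  | nil => exact absurd rfl hl
  | cons x xs ih =>
    rcases xs with _ | ⟨y, ys⟩
    · exact ⟨x, List.mem_singleton_self x, h⟩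
    · cases h with
      | plusL h => exact ⟨x, List.mem_cons_self, h⟩
      | plusR h =>
        obtain ⟨m, hm, h⟩ := ih (List.cons_ne_nil y ys) h
        exact ⟨m, List.mem_cons_of_mem x hm, h⟩
      | verdict hv => cases hv

theorem WTrace.single {m n : Mon Act} {a : Act} (h : Step m (some a) n) : WTrace m [a] n :=
  WTrace.cons Relation.ReflTransGen.refl h (WTrace.nil Relation.ReflTransGen.refl)

theorem WTrace.invariant {P : Mon Act → Prop} (hP : ∀ x α y, P x → Step x α y → P y)
    {m n : Mon Act} {s : List Act} (h : WTrace m s n) (hm : P m) : P n := by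
  have tau : ∀ {x y}, TauStar x y → P x → P y := fun hxy hx =>
    Relation.ReflTransGen.rec hx (fun _ hst ih => hP _ _ _ ih hst) hxy
  induction h with
  | nil ht => exact tau ht hm
  | cons ht hst _ ih => exact ih (hP _ _ _ (tau ht hm) hst)

theorem Lr_eq_empty_of_forall_step_eq_yes {m : Mon Act}
    (hm : ∀ α n, Step m α n → n = Mon.yes) : Lr m = ∅ := by
  have closed : ∀ x α y, (x = m ∨ x = Mon.yes) → Step x α y → y = m ∨ y = Mon.yes := by
    rintro x α y (rfl | rfl) hst
    · exact Or.inr (hm α y hst)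
    · exact Or.inr (hst.eq_of_isVerdict IsVerdict.yes)
  refine Set.eq_empty_of_forall_notMem fun s hs => ?_
  rcases WTrace.invariant closed hs (Or.inl rfl) with hno | hno
  · -- `no` has a τ-loop, but every transition of `m` leads to `yes`
    have := hm none Mon.no (hno ▸ Step.verdict IsVerdict.no)
    cases this
  · cases hno

theorem omegaCl_eq_univ_of_singleton_mem {A : Set (List Act)} (hA : ∀ a, [a] ∈ A) :
    omegaCl A = Set.univ :=
  Set.eq_univ_of_forall fun w => ⟨1, hA (w 0)⟩

/-- soundness of `Y_ω` over a finite nonempty alphabet. -/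
theorem stmt9 [Fintype Act] [Nonempty Act] :
    OmegaEq (Mon.yes : Mon Act)
        (sumList ((Finset.univ : Finset Act).toList.map (fun a => Mon.act a Mon.yes))) ∧
    omegaCl (La (Mon.yes : Mon Act)) = Set.univ ∧
    omegaCl (La (sumList ((Finset.univ : Finset Act).toList.map
        (fun a => Mon.act a Mon.yes)))) = Set.univ ∧
    Lr (Mon.yes : Mon Act) = ∅ ∧
    Lr (sumList ((Finset.univ : Finset Act).toList.map (fun a => Mon.act a Mon.yes))) = ∅ := by
  set l := (Finset.univ : Finset Act).toList.map (fun a => Mon.act a Mon.yes)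
  have hmem (a : Act) : Mon.act a Mon.yes ∈ l :=
    List.mem_map_of_mem (Finset.mem_toList.mpr (Finset.mem_univ a))
  have hl : l ≠ [] := List.ne_nil_of_mem (hmem (Classical.arbitrary Act))
  have hsum_step (α : Option Act) (n : Mon Act) (h : Step (sumList l) α n) : n = Mon.yes := by
    obtain ⟨m, hm, h⟩ := Step.exists_mem_of_sumList hl h
    obtain ⟨a, -, rfl⟩ := List.mem_map.mp hm
    cases h with
    | act => rfl
    | verdict hv => cases hv
  have hLa_yes : omegaCl (La (Mon.yes : Mon Act)) = Set.univ :=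
    omegaCl_eq_univ_of_singleton_mem fun _ => WTrace.single (Step.verdict IsVerdict.yes)
  have hLa_sum : omegaCl (La (sumList l)) = Set.univ :=
    omegaCl_eq_univ_of_singleton_mem fun a =>
      WTrace.single (Step.sumList_of_mem (hmem a) (Step.act a _))
  have hLr_yes : Lr (Mon.yes : Mon Act) = ∅ :=
    Lr_eq_empty_of_forall_step_eq_yes fun _ _ h => h.eq_of_isVerdict IsVerdict.yes
  have hLr_sum : Lr (sumList l) = ∅ := Lr_eq_empty_of_forall_step_eq_yes hsum_step
  exact ⟨⟨hLa_yes.trans hLa_sum.symm, by rw [hLr_yes, hLr_sum]⟩, hLa_yes, hLa_sum, hLr_yes, hLr_sum⟩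
end

section
/- The axiom system E_v is ground complete for verdict equivalence: for all closed monitors m and n, if m ≃ n then E_v ⊢ m = n. -/
variable {Act : Type}

/-!
Every closed monitor is `E_v`-provably equal to the sum of `s.v` over its verdict paths `(s, v)`,
`v ∈ {yes, no}`: `D_a` distributes actions over sums, and `E_a`, `A4` erase `end`. The acceptance
(rejection) language of any monitor consists exactly of the extensions of its paths ending in `yes`
(`no`). Since `Y_a` and `N_a` let `s.v` absorb `(s ++ t).v`, the path sum of a monitor absorbs every
path of another monitor with smaller languages. Verdict-equivalent monitors thus have path sums that
absorb each other, and two terms absorbing each other are provably equal by `A1`.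
-/

local infix:50 " ≐ " => Deriv EvAx

instance {E : Mon Act → Mon Act → Prop} : Trans (Deriv E) (Deriv E) (Deriv E) :=
  ⟨Deriv.trans⟩

section Semantics

variable {a : Act} {m n p q : Mon Act} {α : Option Act} {s : List Act}

lemma step_act_iff : Step (Mon.act a m) α p ↔ α = some a ∧ p = m := by
  constructor
  · intro h
    cases h with
    | act => exact ⟨rfl, rfl⟩
    | verdict hv => cases hv
  · rintro ⟨rfl, rfl⟩
    exact .act a _

lemma step_plus_iff : Step (Mon.plus m n) α p ↔ Step m α p ∨ Step n α p := by
  constructor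
  · intro h
    cases h with
    | plusL h => exact .inl h
    | plusR h => exact .inr h
    | verdict hv => cases hv
  · rintro (h | h)
    exacts [.plusL h, .plusR h]

lemma not_step_var {x : ℕ} : ¬ Step (Mon.var x : Mon Act) α p := by
  rintro (_ | _ | _ | ⟨⟨⟩⟩)

lemma Step.eq_of_isVerdict_s14 (hm : IsVerdict m) (h : Step m α p) : p = m := by
  cases h <;> first | rfl | cases hm

lemma TauStar.eq_of_forall_step (hm : ∀ p, Step m none p → p = m) (h : TauStar m q) :
    q = m := by
  induction h with
  | refl => rfl
  | tail _ hstep ih =>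
    subst ih
    exact hm _ hstep

lemma tauStar_act (h : TauStar (Mon.act a m) p) : p = Mon.act a m :=
  h.eq_of_forall_step fun _ hstep => by simp [step_act_iff] at hstep

lemma tauStar_plus (h : TauStar (Mon.plus m n) p) :
    p = Mon.plus m n ∨ TauStar m p ∨ TauStar n p := by
  rcases Relation.ReflTransGen.cases_head h with rfl | ⟨c, hc, hcp⟩
  · exact .inl rfl
  · rcases step_plus_iff.1 hc with h' | h'
    exacts [.inr (.inl (.head h' hcp)), .inr (.inr (.head h' hcp))]

lemma WTrace.eq_of_forall_step (hm : ∀ α p, Step m α p → p = m) (h : WTrace m s q) :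
    q = m := by
  induction h with
  | nil h => exact h.eq_of_forall_step (hm none)
  | cons h₁ h₂ _ ih =>
    obtain rfl := h₁.eq_of_forall_step (hm none)
    obtain rfl := hm _ _ h₂
    exact ih hm

lemma wtrace_isVerdict_iff (hm : IsVerdict m) : WTrace m s q ↔ q = m := by
  refine ⟨WTrace.eq_of_forall_step fun _ _ => Step.eq_of_isVerdict_s14 hm, ?_⟩
  rintro rfl
  induction s with
  | nil => exact .nil .refl
  | cons a s ih => exact .cons .refl (.verdict hm) ih

lemma WTrace.mono {m' : Mon Act} (hstep : ∀ α p, Step m α p → Step m' α p) (hq : IsVerdict q)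
    (h : WTrace m s q) : WTrace m' s q := by
  have lift : ∀ {p}, TauStar m p → p = m ∨ TauStar m' p := fun hp => by
    rcases Relation.ReflTransGen.cases_head hp with rfl | ⟨c, hc, hcp⟩
    exacts [.inl rfl, .inr (.head (hstep _ _ hc) hcp)]
  cases h with
  | nil h =>
    rcases lift h with rfl | h
    exacts [.nil (.single (hstep _ _ (.verdict hq))), .nil h]
  | cons h₁ h₂ h₃ =>
    rcases lift h₁ with rfl | h₁
    exacts [.cons .refl (hstep _ _ h₂) h₃, .cons h₁ h₂ h₃]

lemma wtrace_act_iff (hq : IsVerdict q) :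
    WTrace (Mon.act a m) s q ↔ ∃ t, s = a :: t ∧ WTrace m t q := by
  constructor
  · intro h
    cases h with
    | nil h => cases tauStar_act h; cases hq
    | cons h₁ h₂ h₃ =>
      cases tauStar_act h₁
      obtain ⟨⟨⟩, rfl⟩ := step_act_iff.1 h₂
      exact ⟨_, rfl, h₃⟩
  · rintro ⟨t, rfl, h⟩
    exact .cons .refl (.act a m) h

lemma wtrace_plus_iff (hq : IsVerdict q) :
    WTrace (Mon.plus m n) s q ↔ WTrace m s q ∨ WTrace n s q := by
  refine ⟨fun h => ?_, ?_⟩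
  · cases h with
    | nil h =>
      rcases tauStar_plus h with rfl | h | h
      · cases hq
      exacts [.inl (.nil h), .inr (.nil h)]
    | cons h₁ h₂ h₃ =>
      rcases tauStar_plus h₁ with rfl | h₁ | h₁
      · exact (step_plus_iff.1 h₂).imp (.cons .refl · h₃) (.cons .refl · h₃)
      exacts [.inl (.cons h₁ h₂ h₃), .inr (.cons h₁ h₂ h₃)]
  · rintro (h | h)
    exacts [h.mono (fun _ _ => .plusL) hq, h.mono (fun _ _ => .plusR) hq]

end Semantics

def verdictPaths : Mon Act → List (List Act × Mon Act)
  | Mon.yes => [([], Mon.yes)]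
  | Mon.no => [([], Mon.no)]
  | Mon.act a m => (verdictPaths m).map fun p => (a :: p.1, p.2)
  | Mon.plus m n => verdictPaths m ++ verdictPaths n
  | _ => []

def pathSum (m : Mon Act) : Mon Act :=
  sumList ((verdictPaths m).map fun p => prefixMon p.1 p.2)

lemma verdict_of_mem_verdictPaths {m : Mon Act} {p : List Act × Mon Act}
    (hp : p ∈ verdictPaths m) : p.2 = Mon.yes ∨ p.2 = Mon.no := by
  induction m generalizing p with
  | yes | no => simp_all [verdictPaths]
  | act a m ih =>
    obtain ⟨p', hp', rfl⟩ := List.mem_map.1 hp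
    exact @ih p' hp'
  | plus m n ihm ihn => exact (List.mem_append.1 hp).elim ihm ihn
  | end_ | var => simp [verdictPaths] at hp

lemma wtrace_iff_exists_verdictPaths {m q : Mon Act} (hq : q = Mon.yes ∨ q = Mon.no)
    {s : List Act} : WTrace m s q ↔ ∃ p ∈ verdictPaths m, p.2 = q ∧ p.1 <+: s := by
  have hqv : IsVerdict q := by rcases hq with rfl | rfl <;> constructor
  induction m generalizing s with
  | end_ => rcases hq with rfl | rfl <;> simp [verdictPaths, wtrace_isVerdict_iff .end_]
  | yes => simp [verdictPaths, wtrace_isVerdict_iff .yes, eq_comm]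
  | no => simp [verdictPaths, wtrace_isVerdict_iff .no, eq_comm]
  | var x =>
    simp only [verdictPaths, List.not_mem_nil, false_and, exists_false, iff_false]
    intro h
    cases h.eq_of_forall_step fun _ _ h => (not_step_var h).elim
    cases hqv
  | act a m ih =>
    simp only [verdictPaths, wtrace_act_iff hqv, ih, List.mem_map]
    constructor
    · rintro ⟨t, rfl, p, hp, rfl, hpt⟩
      exact ⟨_, ⟨p, hp, rfl⟩, rfl, List.cons_prefix_cons.2 ⟨rfl, hpt⟩⟩
    · rintro ⟨_, ⟨p, hp, rfl⟩, rfl, hps⟩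
      obtain ⟨t, rfl, hpt⟩ := List.cons_prefix_iff.1 hps
      exact ⟨t, rfl, p, hp, rfl, hpt⟩
  | plus m n ihm ihn =>
    simp [verdictPaths, wtrace_plus_iff hqv, ihm, ihn, or_and_right, exists_or]

namespace EvAx

variable (a : Act) (m n p : Mon Act)

lemma plus_comm : Mon.plus m n ≐ Mon.plus n m :=
  Deriv.subst (fun k => if k = 0 then m else n) (.ax A1)

lemma plus_assoc : Mon.plus m (Mon.plus n p) ≐ Mon.plus (Mon.plus m n) p :=
  Deriv.subst (fun k => if k = 0 then m else if k = 1 then n else p) (.ax A2)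

lemma plus_idem : Mon.plus m m ≐ m :=
  Deriv.subst (fun _ => m) (.ax A3)

lemma plus_end : Mon.plus m Mon.end_ ≐ m :=
  Deriv.subst (fun _ => m) (.ax A4)

lemma act_plus : Mon.act a (Mon.plus m n) ≐ Mon.plus (Mon.act a m) (Mon.act a n) :=
  Deriv.subst (fun k => if k = 0 then m else n) (.ax (Da a))

end EvAx

lemma sumList_cons (x : Mon Act) (l : List (Mon Act)) :
    sumList (x :: l) ≐ Mon.plus x (sumList l) := by
  cases l with
  | nil => exact (EvAx.plus_end x).symm
  | cons => exact .refl _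

lemma sumList_append (l₁ l₂ : List (Mon Act)) :
    sumList (l₁ ++ l₂) ≐ Mon.plus (sumList l₁) (sumList l₂) := by
  induction l₁ with
  | nil => exact ((EvAx.plus_comm _ _).trans (EvAx.plus_end _)).symm
  | cons x l ih =>
    calc sumList (x :: (l ++ l₂))
        _ ≐ Mon.plus x (sumList (l ++ l₂)) := sumList_cons _ _
        _ ≐ Mon.plus x (Mon.plus (sumList l) (sumList l₂)) := .plus (.refl x) ih
        _ ≐ Mon.plus (Mon.plus x (sumList l)) (sumList l₂) := EvAx.plus_assoc _ _ _
        _ ≐ Mon.plus (sumList (x :: l)) (sumList l₂) := .plus (sumList_cons x l).symm (.refl _)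

lemma act_sumList (a : Act) (l : List (Mon Act)) :
    Mon.act a (sumList l) ≐ sumList (l.map (Mon.act a)) := by
  induction l with
  | nil => exact .ax (.Ea a)
  | cons x l ih =>
    cases l with
    | nil => exact .refl _
    | cons y l => exact (EvAx.act_plus a x _).trans (.plus (.refl _) ih)

/-- `Absorbs m n` says `n ≤ m` in the join-semilattice of monitors modulo `E_v`. -/
def Mon.Absorbs (m n : Mon Act) : Prop := Mon.plus m n ≐ m

namespace Mon.Absorbs

variable {m m' n n' p : Mon Act}

lemma refl (m : Mon Act) : Absorbs m m := EvAx.plus_idem m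

lemma plus_left (m n : Mon Act) : Absorbs (Mon.plus m n) m :=
  calc Mon.plus (Mon.plus m n) m
      _ ≐ Mon.plus (Mon.plus n m) m := .plus (EvAx.plus_comm m n) (.refl m)
      _ ≐ Mon.plus n (Mon.plus m m) := (EvAx.plus_assoc n m m).symm
      _ ≐ Mon.plus n m := .plus (.refl n) (EvAx.plus_idem m)
      _ ≐ Mon.plus m n := EvAx.plus_comm n m

lemma plus_right (m n : Mon Act) : Absorbs (Mon.plus m n) n :=
  calc Mon.plus (Mon.plus m n) n
      _ ≐ Mon.plus m (Mon.plus n n) := (EvAx.plus_assoc m n n).symm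
      _ ≐ Mon.plus m n := .plus (.refl m) (EvAx.plus_idem n)

lemma congr_left (hm : m ≐ m') (h : Absorbs m n) : Absorbs m' n :=
  (Deriv.plus hm.symm (.refl n)).trans (h.trans hm)

lemma congr_right (hn : n ≐ n') (h : Absorbs m n) : Absorbs m n' :=
  (Deriv.plus (.refl m) hn.symm).trans h

lemma trans (h₁ : Absorbs m n) (h₂ : Absorbs n p) : Absorbs m p :=
  calc Mon.plus m p
      _ ≐ Mon.plus (Mon.plus m n) p := .plus h₁.symm (.refl p)
      _ ≐ Mon.plus m (Mon.plus n p) := (EvAx.plus_assoc m n p).symm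
      _ ≐ Mon.plus m n := .plus (.refl m) h₂
      _ ≐ m := h₁

lemma plus (h₁ : Absorbs m n) (h₂ : Absorbs m n') : Absorbs m (Mon.plus n n') :=
  (EvAx.plus_assoc m n n').trans ((Deriv.plus h₁ (.refl n')).trans h₂)

lemma antisymm (h₁ : Absorbs m n) (h₂ : Absorbs n m) : m ≐ n :=
  h₁.symm.trans ((EvAx.plus_comm m n).trans h₂)

lemma act (h : Absorbs m n) (a : Act) : Absorbs (Mon.act a m) (Mon.act a n) :=
  (EvAx.act_plus a m n).symm.trans (.act a h)

lemma prefixMon (h : Absorbs m n) (s : List Act) :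
    Absorbs (prefixMon s m) (prefixMon s n) := by
  induction s with
  | nil => exact h
  | cons a s ih => exact ih.act a

lemma sumList_of_forall {l : List (Mon Act)} (h : ∀ x ∈ l, Absorbs m x) :
    Absorbs m (sumList l) := by
  induction l with
  | nil => exact EvAx.plus_end m
  | cons x l ih =>
    refine congr_right (sumList_cons x l).symm (plus (h x ?_) (ih fun y hy => h y ?_))
    exacts [List.mem_cons_self, List.mem_cons_of_mem x hy]

lemma sumList_of_mem {l : List (Mon Act)} {x : Mon Act} (hx : x ∈ l) : Absorbs (sumList l) x := by
  induction l with
  | nil => cases hx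
  | cons y l ih =>
    refine congr_left (sumList_cons y l).symm ?_
    rcases List.mem_cons.1 hx with rfl | hx
    exacts [plus_left x _, (plus_right y _).trans (ih hx)]

end Mon.Absorbs

lemma absorbs_prefixMon_verdict {v : Mon Act} (hv : v = Mon.yes ∨ v = Mon.no) (t : List Act) :
    Mon.Absorbs v (prefixMon t v) := by
  induction t with
  | nil => exact .refl v
  | cons a t ih =>
    have hact : Mon.Absorbs v (Mon.act a v) := by
      rcases hv with rfl | rfl
      exacts [(Deriv.ax (.Ya a)).symm, (Deriv.ax (.Na a)).symm]
    exact hact.trans (ih.act a)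

lemma absorbs_prefixMon_of_prefix {v : Mon Act} (hv : v = Mon.yes ∨ v = Mon.no) {s s' : List Act}
    (h : s <+: s') : Mon.Absorbs (prefixMon s v) (prefixMon s' v) := by
  obtain ⟨t, rfl⟩ := h
  simpa only [prefixMon, List.foldr_append] using (absorbs_prefixMon_verdict hv t).prefixMon s

lemma deriv_pathSum : ∀ {m : Mon Act}, Closed m → m ≐ pathSum m
  | .end_, _ | .yes, _ | .no, _ => .refl _
  | .act a m, hm => by
    refine (Deriv.act a (deriv_pathSum (m := m) hm)).trans ((act_sumList a _).trans ?_)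
    simp only [pathSum, verdictPaths, List.map_map]
    exact .refl _
  | .plus m n, hmn => by
    refine (Deriv.plus (deriv_pathSum (m := m) hmn.1) (deriv_pathSum (m := n) hmn.2)).trans ?_
    simp only [pathSum, verdictPaths, List.map_append]
    exact (sumList_append _ _).symm

lemma absorbs_pathSum {m n : Mon Act}
    (h : ∀ q s, (q = Mon.yes ∨ q = Mon.no) → WTrace n s q → WTrace m s q) :
    Mon.Absorbs (pathSum m) (pathSum n) := by
  refine Mon.Absorbs.sumList_of_forall fun x hx => ?_
  obtain ⟨p, hp, rfl⟩ := List.mem_map.1 hx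
  have hv := verdict_of_mem_verdictPaths hp
  obtain ⟨p', hp', hv', hpre⟩ := (wtrace_iff_exists_verdictPaths hv).1 <|
    h _ _ hv ((wtrace_iff_exists_verdictPaths hv).2 ⟨p, hp, rfl, List.prefix_refl _⟩)
  refine (Mon.Absorbs.sumList_of_mem (List.mem_map_of_mem hp')).trans ?_
  rw [hv']
  exact absorbs_prefixMon_of_prefix hv hpre

/-- ground completeness of `E_v` for verdict equivalence. -/
theorem stmt14 (m n : Mon Act) (hm : Closed m) (hn : Closed n) (h : VerdEq m n) :
    Deriv EvAx m n := by
  have hsem : ∀ q s, (q = Mon.yes ∨ q = Mon.no) → (WTrace m s q ↔ WTrace n s q) := by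
    rintro q s (rfl | rfl)
    exacts [Set.ext_iff.1 h.1 s, Set.ext_iff.1 h.2 s]
  calc m
      _ ≐ pathSum m := deriv_pathSum hm
      _ ≐ pathSum n := Mon.Absorbs.antisymm (absorbs_pathSum fun q s hq => (hsem q s hq).2)
          (absorbs_pathSum fun q s hq => (hsem q s hq).1)
      _ ≐ n := (deriv_pathSum hn).symm
end

section
/- For a closed monitor m and a finite trace s: if m ⇒^s yes then E_v ⊢ m = m + s.yes, and if m ⇒^s no then E_v ⊢ m = m + s.no, where s.v denotes the monitor prefixing the verdict v by the actions of s. -/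
variable {Act : Type}

local infix:50 " =ₑ " => Deriv EvAx

theorem deriv_plus_comm (m n : Mon Act) : Mon.plus m n =ₑ Mon.plus n m :=
  Deriv.subst (fun i => if i = 0 then m else n) (Deriv.ax EvAx.A1)

theorem deriv_plus_assoc (m n p : Mon Act) :
    Mon.plus m (Mon.plus n p) =ₑ Mon.plus (Mon.plus m n) p :=
  Deriv.subst (fun i => if i = 0 then m else if i = 1 then n else p) (Deriv.ax EvAx.A2)

theorem deriv_plus_self (m : Mon Act) : Mon.plus m m =ₑ m :=
  Deriv.subst (fun _ => m) (Deriv.ax EvAx.A3)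

theorem deriv_act_plus (a : Act) (m n : Mon Act) :
    Mon.act a (Mon.plus m n) =ₑ Mon.plus (Mon.act a m) (Mon.act a n) :=
  Deriv.subst (fun i => if i = 0 then m else n) (Deriv.ax (EvAx.Da a))

def IsSummand (c m : Mon Act) : Prop := m =ₑ Mon.plus m c

namespace IsSummand

theorem refl (m : Mon Act) : IsSummand m m :=
  Deriv.symm (deriv_plus_self m)

theorem plus_right {c m : Mon Act} (n : Mon Act) (h : IsSummand c m) :
    IsSummand c (Mon.plus m n) :=
  calc Mon.plus m n
      =ₑ Mon.plus (Mon.plus m c) n := Deriv.plus h (Deriv.refl n)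
    _ =ₑ Mon.plus m (Mon.plus c n) := Deriv.symm (deriv_plus_assoc m c n)
    _ =ₑ Mon.plus m (Mon.plus n c) := Deriv.plus (Deriv.refl m) (deriv_plus_comm c n)
    _ =ₑ Mon.plus (Mon.plus m n) c := deriv_plus_assoc m n c

theorem plus_left {c n : Mon Act} (m : Mon Act) (h : IsSummand c n) :
    IsSummand c (Mon.plus m n) :=
  calc Mon.plus m n
      =ₑ Mon.plus n m := deriv_plus_comm m n
    _ =ₑ Mon.plus (Mon.plus n m) c := h.plus_right m
    _ =ₑ Mon.plus (Mon.plus m n) c := Deriv.plus (deriv_plus_comm n m) (Deriv.refl c)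

theorem trans {c n m : Mon Act} (hnm : IsSummand n m) (hcn : IsSummand c n) :
    IsSummand c m :=
  calc m
      =ₑ Mon.plus m n := hnm
    _ =ₑ Mon.plus (Mon.plus m n) c := hcn.plus_left m
    _ =ₑ Mon.plus m c := Deriv.plus (Deriv.symm hnm) (Deriv.refl c)

theorem act (a : Act) {c m : Mon Act} (h : IsSummand c m) :
    IsSummand (Mon.act a c) (Mon.act a m) :=
  Deriv.trans (Deriv.act a h) (deriv_act_plus a m c)

end IsSummand

theorem IsVerdict.isSummand_act {v : Mon Act} (hv : IsVerdict v) (a : Act) :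
    IsSummand (Mon.act a v) v := by
  cases hv with
  | yes => exact Deriv.ax (EvAx.Ya a)
  | no => exact Deriv.ax (EvAx.Na a)
  | end_ =>
    exact Deriv.trans (IsSummand.refl _)
      (Deriv.plus (Deriv.refl _) (Deriv.symm (Deriv.ax (EvAx.Ea a))))

theorem Step.isSummand_act {m n : Mon Act} {a : Act} (h : Step m (some a) n) :
    IsSummand (Mon.act a n) m := by
  generalize hα : some a = α at h
  induction h with
  | act => cases hα; exact IsSummand.refl _
  | plusL _ ih => exact (ih hα).plus_right _
  | plusR _ ih => exact (ih hα).plus_left _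
  | verdict hv => cases hα; exact hv.isSummand_act a

theorem Step.isSummand_of_tau {m n : Mon Act} (h : Step m none n) : IsSummand n m := by
  generalize hα : none = α at h
  induction h with
  | act => cases hα
  | plusL _ ih => exact (ih hα).plus_right _
  | plusR _ ih => exact (ih hα).plus_left _
  | verdict => exact IsSummand.refl _

theorem TauStar.isSummand {m n : Mon Act} (h : TauStar m n) : IsSummand n m := by
  induction h with
  | refl => exact IsSummand.refl m
  | tail _ hstep ih => exact ih.trans (Step.isSummand_of_tau hstep)

theorem WTrace.isSummand_prefixMon {m n : Mon Act} {s : List Act} (h : WTrace m s n) :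
    IsSummand (prefixMon s n) m := by
  induction h with
  | nil hτ => exact TauStar.isSummand hτ
  | cons hτ hstep _ ih =>
    exact (TauStar.isSummand hτ).trans ((Step.isSummand_act hstep).trans (ih.act _))

theorem stmt15_general (m : Mon Act) (s : List Act) :
    (WTrace m s Mon.yes → Deriv EvAx m (Mon.plus m (prefixMon s Mon.yes))) ∧
    (WTrace m s Mon.no → Deriv EvAx m (Mon.plus m (prefixMon s Mon.no))) :=
  ⟨WTrace.isSummand_prefixMon, WTrace.isSummand_prefixMon⟩

/-- accepted/rejected traces can be made into explicit summands. -/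
theorem stmt15 (m : Mon Act) (hm : Closed m) (s : List Act) :
    (WTrace m s Mon.yes → Deriv EvAx m (Mon.plus m (prefixMon s Mon.yes))) ∧
    (WTrace m s Mon.no → Deriv EvAx m (Mon.plus m (prefixMon s Mon.no))) :=
  stmt15_general m s
end

section
/- For every trace s ∈ Act* and every k ≥ 0, the equation O2_{s,k}: x + s.x + s̄^(k)(yes + no) = x + s̄^(k)(yes + no) is sound with respect to verdict equivalence, i.e., for every closed substitution σ, σ(x + s.x + s̄^(k)(yes+no)) ≃ σ(x + s̄^(k)(yes+no)). -/
variable {Act : Type}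

/-!
For these recursion-free monitors, `m` weakly reaches `yes` (or `no`) along `t` iff `m`
syntactically commits to that verdict after reading some prefix of `t`; in particular verdict
languages are closed under extension. Unfolding the sums, `s̄^(k)(yes + no)` commits to both
verdicts on every `s ++ v` with `v` not a prefix of `s^(k-1)`. Any other trace `s ++ v` reached
through the summand `s.x` has `v <+: s^(k-1)`, hence `s ++ v = v ++ r` for some `r`, and `x`
already reaches it from `v`.
-/

namespace Mon

/-- `Reaches true` stands for reaching `yes`, `Reaches false` for reaching `no`. -/
def Reaches (b : Bool) : Mon Act → List Act → Prop
  | yes, _ => b = true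
  | no, _ => b = false
  | act a m, t => ∃ r, t = a :: r ∧ Reaches b m r
  | plus m n, t => Reaches b m t ∨ Reaches b n t
  | end_, _ => False
  | var _, _ => False

def verdict (b : Bool) : Mon Act := if b then yes else no

@[simp] lemma reaches_act {b : Bool} {a : Act} {m : Mon Act} {t : List Act} :
    Reaches b (act a m) t ↔ ∃ r, t = a :: r ∧ Reaches b m r := Iff.rfl

@[simp] lemma reaches_plus {b : Bool} {m n : Mon Act} {t : List Act} :
    Reaches b (plus m n) t ↔ Reaches b m t ∨ Reaches b n t := Iff.rfl

lemma reaches_yes_plus_no (b : Bool) (t : List Act) : Reaches b (plus yes no) t := by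
  cases b
  · exact Or.inr rfl
  · exact Or.inl rfl

lemma isVerdict_verdict (b : Bool) : IsVerdict (verdict b : Mon Act) := by
  cases b
  · exact IsVerdict.no
  · exact IsVerdict.yes

lemma reaches_verdict (b : Bool) (t : List Act) : Reaches b (verdict b : Mon Act) t := by
  cases b <;> rfl

lemma Reaches.append {b : Bool} : ∀ {m : Mon Act} {t : List Act} (u : List Act),
    Reaches b m t → Reaches b m (t ++ u)
  | yes, _, _, h | no, _, _, h => h
  | act _ _, _, u, ⟨r, rfl, hr⟩ => ⟨r ++ u, rfl, hr.append u⟩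
  | plus _ _, _, u, h => h.imp (·.append u) (·.append u)

lemma reaches_sumList {b : Bool} : ∀ {l : List (Mon Act)} {t : List Act},
    Reaches b (sumList l) t ↔ ∃ m ∈ l, Reaches b m t
  | [], _ => by simp [sumList, Reaches]
  | [_], _ => by simp [sumList]
  | m :: m' :: ms, t => by
      rw [show sumList (m :: m' :: ms) = plus m (sumList (m' :: ms)) from rfl, reaches_plus,
        reaches_sumList]
      simp

lemma reaches_prefixMon {b : Bool} {m : Mon Act} : ∀ {u t : List Act},
    Reaches b (prefixMon u m) t ↔ ∃ r, t = u ++ r ∧ Reaches b m r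
  | [], _ => by simp [prefixMon]
  | a :: u, t => by
      simp only [prefixMon, List.foldr_cons, reaches_act, List.cons_append]
      constructor
      · rintro ⟨r, rfl, hr⟩
        obtain ⟨r', rfl, hr'⟩ := reaches_prefixMon.1 hr
        exact ⟨r', rfl, hr'⟩
      · rintro ⟨r, rfl, hr⟩
        exact ⟨u ++ r, rfl, reaches_prefixMon.2 ⟨r, rfl, hr⟩⟩

end Mon

open Mon

section Semantics

lemma wTrace_verdict_self {v : Mon Act} (hv : IsVerdict v) : ∀ u, WTrace v u v
  | [] => .nil .refl
  | _ :: u => .cons .refl (.verdict hv) (wTrace_verdict_self hv u)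

lemma WTrace.of_step_imp {m m' v : Mon Act} {t : List Act} (hv : IsVerdict v)
    (hsim : ∀ α p, Step m α p → Step m' α p) (h : WTrace m t v) : WTrace m' t v := by
  cases h with
  | nil hts =>
      rcases hts.cases_head with rfl | ⟨p, hstep, hts'⟩
      · exact .nil (.single (hsim _ _ (.verdict hv)))
      · exact .nil (.head (hsim _ _ hstep) hts')
  | cons hts hstep hrest =>
      rcases hts.cases_head with rfl | ⟨p, hstep', hts'⟩
      · exact .cons .refl (hsim _ _ hstep) hrest
      · exact .cons (.head (hsim _ _ hstep') hts') hstep hrest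

lemma Step.reaches_of_tau {b : Bool} {m p : Mon Act} {t : List Act} (h : Step m none p)
    (hp : Reaches b p t) : Reaches b m t := by
  generalize hα : (none : Option Act) = α at h
  induction h with
  | act => cases hα
  | plusL _ ih => exact Or.inl (ih hp hα)
  | plusR _ ih => exact Or.inr (ih hp hα)
  | verdict => exact hp

lemma Step.reaches_of_act {b : Bool} {m p : Mon Act} {a : Act} {t : List Act}
    (h : Step m (some a) p) (hp : Reaches b p t) : Reaches b m (a :: t) := by
  generalize hα : (some a : Option Act) = α at h
  induction h with
  | act =>
      cases hα
      exact ⟨_, rfl, hp⟩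
  | plusL _ ih => exact Or.inl (ih hp hα)
  | plusR _ ih => exact Or.inr (ih hp hα)
  | verdict hv => cases hv <;> exact hp

lemma TauStar.reaches {b : Bool} {m p : Mon Act} {t : List Act} (h : TauStar m p)
    (hp : Reaches b p t) : Reaches b m t := by
  induction h using Relation.ReflTransGen.head_induction_on with
  | refl => exact hp
  | head hstep _ ih => exact hstep.reaches_of_tau ih

lemma WTrace.reaches {b : Bool} {m : Mon Act} {t : List Act}
    (h : WTrace m t (verdict b)) : Reaches b m t := by
  generalize hv : verdict b = v at h
  induction h with
  | nil hts => exact hts.reaches (hv ▸ reaches_verdict b [])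
  | cons hts hstep _ ih => exact hts.reaches (hstep.reaches_of_act (ih hv))

lemma Mon.Reaches.wTrace {b : Bool} : ∀ {m : Mon Act} {t : List Act},
    Reaches b m t → WTrace m t (verdict b)
  | yes, t, h => by subst h; exact wTrace_verdict_self .yes t
  | no, t, h => by subst h; exact wTrace_verdict_self .no t
  | act a m, _, ⟨_, rfl, hr⟩ => .cons .refl (.act a m) hr.wTrace
  | plus _ _, _, h => h.elim
      (fun h => h.wTrace.of_step_imp (isVerdict_verdict b) fun _ _ => .plusL)
      (fun h => h.wTrace.of_step_imp (isVerdict_verdict b) fun _ _ => .plusR)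

lemma wTrace_verdict_iff_reaches {b : Bool} {m : Mon Act} {t : List Act} :
    WTrace m t (verdict b) ↔ Reaches b m t :=
  ⟨WTrace.reaches, Reaches.wTrace⟩

lemma verdEq_of_reaches_iff {m n : Mon Act} (h : ∀ b t, Reaches b m t ↔ Reaches b n t) :
    VerdEq m n := by
  constructor <;> ext t
  · exact (wTrace_verdict_iff_reaches (b := true)).trans
      ((h true t).trans wTrace_verdict_iff_reaches.symm)
  · exact (wTrace_verdict_iff_reaches (b := false)).trans
      ((h false t).trans wTrace_verdict_iff_reaches.symm)

end Semantics

section Traces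

lemma spow_succ (s : List Act) (j : ℕ) : spow s (j + 1) = s ++ spow s j := by
  simp [spow, List.replicate_succ]

lemma spow_succ' (s : List Act) (j : ℕ) : spow s (j + 1) = spow s j ++ s := by
  simp [spow, List.replicate_succ']

lemma prefix_of_prefix_spow {s v : List Act} {j : ℕ} (h : v <+: spow s j) : v <+: s ++ v := by
  refine List.prefix_of_prefix_length_le (l₃ := spow s (j + 1)) ?_ ?_ (by simp)
  · exact h.trans (spow_succ' s j ▸ List.prefix_append _ _)
  · exact spow_succ s j ▸ (List.prefix_append_right_inj s).2 h

lemma take_length_not_prefix {s t : List Act} (hts : ¬ t <+: s) (hst : ¬ s <+: t) :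
    ¬ t.take s.length <+: s := by
  intro h
  by_cases hlen : t.length ≤ s.length
  · exact hts (List.take_of_length_le hlen ▸ h)
  · have : t.take s.length = s := h.eq_of_length (by simp; omega)
    exact hst (this ▸ List.take_prefix _ _)

lemma mem_tuples {L : List Act} (hL : ∀ a, a ∈ L) :
    ∀ {n : ℕ} {u : List Act}, u ∈ tuples L n ↔ u.length = n
  | 0, u => by simp [tuples, List.length_eq_zero_iff]
  | n + 1, [] => by simp [tuples]
  | n + 1, a :: u => by
      simp only [tuples, List.mem_flatMap, List.mem_map, List.cons.injEq, List.length_cons,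
        Nat.add_right_cancel_iff]
      constructor
      · rintro ⟨t, ht, a, -, rfl, rfl⟩
        exact mem_tuples hL |>.1 ht
      · exact fun h => ⟨u, mem_tuples hL |>.2 h, a, hL a, rfl, rfl⟩

lemma mem_allUpTo {L : List Act} (hL : ∀ a, a ∈ L) {n : ℕ} {u : List Act} :
    u ∈ allUpTo L n ↔ u.length ≤ n := by
  simp only [allUpTo, List.mem_flatMap, List.mem_range, mem_tuples hL]
  exact ⟨fun ⟨i, hi, h⟩ => by omega, fun h => ⟨u.length, by omega, rfl⟩⟩

end Traces

section Sbar

variable [DecidableEq Act] {L : List Act} {b : Bool} {m : Mon Act}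

lemma reaches_sbarLe (hL : ∀ a, a ∈ L) (hm : ∀ t, Reaches b m t) {s t : List Act}
    (hts : ¬ t <+: s) (hst : ¬ s <+: t) : Reaches b (sbarLe L s m) t := by
  refine reaches_sumList.2 ⟨prefixMon (t.take s.length) m, List.mem_map.2 ⟨_, ?_, rfl⟩, ?_⟩
  · rw [List.mem_filter, mem_allUpTo hL, Bool.not_eq_true', ← Bool.not_eq_true,
      List.isPrefixOf_iff_prefix]
    exact ⟨by simp, take_length_not_prefix hts hst⟩
  · exact reaches_prefixMon.2 ⟨_, (List.take_append_drop _ _).symm, hm _⟩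

lemma reaches_sbar (hL : ∀ a, a ∈ L) (hm : ∀ t, Reaches b m t) (s : List Act) {v : List Act}
    (hv : v ≠ []) : Reaches b (sbar L s m) (s ++ v) := by
  obtain ⟨a, w, rfl⟩ := List.exists_cons_of_ne_nil hv
  refine Or.inr (reaches_prefixMon.2 ⟨a :: w, rfl, reaches_sumList.2 ?_⟩)
  exact ⟨act a m, List.mem_map.2 ⟨a, hL a, rfl⟩, w, rfl, hm w⟩

lemma sbarK_eq_sbarK_pred_succ (s : List Act) (k : ℕ) :
    sbarK L s m k = sbarK L s m (k - 1 + 1) := by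
  cases k <;> rfl

lemma reaches_sbarK_succ_succ {s v : List Act} {n : ℕ}
    (h : Reaches b (sbarLe L s m) v ∨ Reaches b (sbarK L s m (n + 1)) v) :
    Reaches b (sbarK L s m (n + 2)) (s ++ v) := by
  cases n with
  | zero =>
      have hsbar : Reaches b (sbar L s m) v := h.elim Or.inl id
      exact Or.inr (reaches_prefixMon.2 ⟨v, by simp [spow], hsbar⟩)
  | succ n =>
      simp only [sbarK, reaches_plus, reaches_sumList, List.mem_map, List.mem_range] at h ⊢
      rcases h with hle | ⟨-, ⟨i, hi, rfl⟩, hi'⟩ | hsbar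
      · refine Or.inl ⟨_, ⟨0, by omega, rfl⟩, reaches_prefixMon.2 ⟨v, ?_, hle⟩⟩
        simp [spow]
      · refine Or.inl ⟨_, ⟨i + 1, by omega, rfl⟩, ?_⟩
        obtain ⟨r, rfl, hr⟩ := reaches_prefixMon.1 hi'
        exact reaches_prefixMon.2 ⟨r, by rw [spow_succ _ (i + 1), List.append_assoc], hr⟩
      · obtain ⟨r, rfl, hr⟩ := reaches_prefixMon.1 hsbar
        refine Or.inr (reaches_prefixMon.2 ⟨r, ?_, hr⟩)
        rw [spow_succ _ (n + 1), List.append_assoc]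

lemma reaches_sbarK (hL : ∀ a, a ∈ L) (hm : ∀ t, Reaches b m t) (s : List Act) :
    ∀ (n : ℕ) {v : List Act}, ¬ v <+: spow s n → Reaches b (sbarK L s m (n + 1)) (s ++ v)
  | 0, v, hv => reaches_sbar hL hm s fun h => hv (h ▸ List.nil_prefix)
  | n + 1, v, hv => by
      refine reaches_sbarK_succ_succ ?_
      by_cases hsv : s <+: v
      · obtain ⟨w, rfl⟩ := hsv
        refine Or.inr (reaches_sbarK hL hm s n fun hw => hv ?_)
        exact spow_succ s n ▸ (List.prefix_append_right_inj s).2 hw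
      · refine Or.inl (reaches_sbarLe hL hm (fun hvs => hv ?_) hsv)
        exact hvs.trans (spow_succ s n ▸ List.prefix_append _ _)

end Sbar

section Substitution

variable (σ : ℕ → Mon Act)

lemma msubst_prefixMon (m : Mon Act) :
    ∀ u : List Act, msubst σ (prefixMon u m) = prefixMon u (msubst σ m)
  | [] => rfl
  | a :: u => congrArg (act a) (msubst_prefixMon m u)

lemma msubst_sumList :
    ∀ l : List (Mon Act), msubst σ (sumList l) = sumList (l.map (msubst σ))
  | [] | [_] => rfl
  | _ :: m' :: ms => congrArg (plus _) (msubst_sumList (m' :: ms))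

lemma msubst_sbarK [DecidableEq Act] (L s : List Act) (m : Mon Act) (k : ℕ) :
    msubst σ (sbarK L s m k) = sbarK L s (msubst σ m) k := by
  have hle : msubst σ (sbarLe L s m) = sbarLe L s (msubst σ m) := by
    simp [sbarLe, msubst_sumList, msubst_prefixMon, Function.comp_def]
  have hbar : msubst σ (sbar L s m) = sbar L s (msubst σ m) := by
    simp [sbar, msubst, hle, msubst_prefixMon, msubst_sumList, Function.comp_def]
  match k with
  | 0 | 1 => exact hbar
  | _ + 2 => simp [sbarK, msubst, hle, hbar, msubst_prefixMon, msubst_sumList, Function.comp_def]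

end Substitution

lemma reaches_plus_prefixMon_plus_iff {b : Bool} {x K : Mon Act} {s t : List Act} {j : ℕ}
    (hK : ∀ v, ¬ v <+: spow s j → Reaches b K (s ++ v)) :
    Reaches b (plus (plus x (prefixMon s x)) K) t ↔ Reaches b (plus x K) t := by
  simp only [reaches_plus]
  refine ⟨?_, Or.imp_left Or.inl⟩
  rintro ((hx | hsx) | hKt)
  · exact Or.inl hx
  · obtain ⟨v, rfl, hv⟩ := reaches_prefixMon.1 hsx
    by_cases hvs : v <+: spow s j
    · obtain ⟨r, hr⟩ := prefix_of_prefix_spow hvs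
      exact Or.inl (hr ▸ hv.append r)
    · exact Or.inr (hK v hvs)
  · exact Or.inr hKt

theorem stmt17_general [Fintype Act] [DecidableEq Act] (s : List Act) (k : ℕ)
    (σ : ℕ → Mon Act) :
    VerdEq
      (msubst σ (Mon.plus (Mon.plus vx (prefixMon s vx))
        (sbarK (Finset.univ : Finset Act).toList s (Mon.plus Mon.yes Mon.no) k)))
      (msubst σ (Mon.plus vx
        (sbarK (Finset.univ : Finset Act).toList s (Mon.plus Mon.yes Mon.no) k))) := by
  simp only [msubst, msubst_prefixMon, msubst_sbarK]
  refine verdEq_of_reaches_iff fun b t => reaches_plus_prefixMon_plus_iff (j := k - 1) ?_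
  rw [sbarK_eq_sbarK_pred_succ]
  exact fun _ => reaches_sbarK (by simp) (reaches_yes_plus_no b) s (k - 1)

/-- soundness of the axioms `O2_{s,k}` with respect to verdict
equivalence, over a finite alphabet. -/
theorem stmt17 [Fintype Act] [DecidableEq Act] (s : List Act) (k : ℕ)
    (σ : ℕ → Mon Act) (hσ : ∀ v, Closed (σ v)) :
    VerdEq
      (msubst σ (Mon.plus (Mon.plus vx (prefixMon s vx))
        (sbarK (Finset.univ : Finset Act).toList s (Mon.plus Mon.yes Mon.no) k)))
      (msubst σ (Mon.plus vx
        (sbarK (Finset.univ : Finset Act).toList s (Mon.plus Mon.yes Mon.no) k))) :=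
  stmt17_general s k σ
end
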